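/- Let L be an (r, Δ, c)-weakly expanding unsatisfiable F₂ linear system and let C be a Boolean function of width at most cr/2 (depending on at most cr/2 of the variables). Suppose there exist α ∈ {0,1} and a set I of at most r/2 equation indices such that (C = 1−α) ∧ L^I is unsatisfiable. Then C is forced to α w.r.t. L, i.e., C equals the constant α on the solution set of L^{Cl(C)}, where Cl(C) is the closure of the variables of C in the incidence graph of L. -/

import Mathlib

open Finset

variable {m n : ℕ}

/-- The `i`-th equation of the linear system `Ax = b` over `F₂` holds at `x`. -/
def EqnHolds (A : Fin m → Fin n → ZMod 2) (b : Fin m → ZMod 2)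
    (i : Fin m) (x : Fin n → ZMod 2) : Prop :=
  ∑ j, A i j * x j = b i

/-- Boundary of a set `I` of rows in the incidence graph of `A`: variables occurring
in exactly one equation of `I`. -/
def rowBdry (A : Fin m → Fin n → ZMod 2) (I : Finset (Fin m)) : Finset (Fin n) :=
  Finset.univ.filter (fun j => (I.filter (fun i => A i j ≠ 0)).card = 1)

/-- The incidence graph of `Ax = b` is an `(r, Δ, c)`-weak expander. -/
def SysIsWeakExpander (A : Fin m → Fin n → ZMod 2) (r Δ : ℕ) (c : ℝ) : Prop :=
  (∀ i : Fin m, (Finset.univ.filter (fun j => A i j ≠ 0)).card ≤ Δ) ∧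
  (∀ I : Finset (Fin m), I.Nonempty → (I.card : ℝ) ≤ r / 2 → (rowBdry A I).Nonempty) ∧
  (∀ I : Finset (Fin m), (r : ℝ) / 2 < I.card → I.card ≤ r →
    c * I.card ≤ ((rowBdry A I).card : ℝ))

/-- `I` is `(r, V)`-contained in the incidence graph: `|I| ≤ r` and all unique
variables of `I` lie in `V`. -/
def RowContained (A : Fin m → Fin n → ZMod 2) (r : ℕ) (V : Finset (Fin n))
    (I : Finset (Fin m)) : Prop :=
  I.card ≤ r ∧ rowBdry A I ⊆ V

/-- `I` is a closure of the variable set `V`: a maximal-size `(r, V)`-contained row set. -/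
def RowClosure (A : Fin m → Fin n → ZMod 2) (r : ℕ) (V : Finset (Fin n))
    (I : Finset (Fin m)) : Prop :=
  RowContained A r V I ∧ ∀ I', RowContained A r V I' → I'.card ≤ I.card

lemma zmod2_ne_zero {a : ZMod 2} (h : a ≠ 0) : a = 1 := by
  revert h; revert a; decide

lemma sum_update_eq (A : Fin m → Fin n → ZMod 2) (i : Fin m) (j : Fin n)
    (y : Fin n → ZMod 2) (v : ZMod 2) :
    ∑ j', A i j' * Function.update y j v j' =
      ∑ j', A i j' * y j' + A i j * (v - y j) := by
  rw [← Finset.add_sum_erase _ (fun j' => A i j' * Function.update y j v j') (Finset.mem_univ j),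
      ← Finset.add_sum_erase _ (fun j' => A i j' * y j') (Finset.mem_univ j)]
  have h : ∑ j' ∈ Finset.univ.erase j, A i j' * Function.update y j v j'
      = ∑ j' ∈ Finset.univ.erase j, A i j' * y j' := by
    apply Finset.sum_congr rfl
    intro j' hj'
    rw [Function.update_of_ne (Finset.ne_of_mem_erase hj')]
  rw [h, Function.update_self]
  ring

/-- If for some `α` and some set `I` of at most `r/2` equations,
`(C = 1 - α) ∧ L^I` is unsatisfiable, then `C` is forced to `α` w.r.t. `L`, i.e. `C`
is constantly `α` on the solution set of `L^{Cl(C)}`. -/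
theorem unsat_implies_forced
    (A : Fin m → Fin n → ZMod 2) (b : Fin m → ZMod 2)
    (r Δ : ℕ) (c : ℝ) (hc : 0 < c)
    (hexp : SysIsWeakExpander A r Δ c)
    (hunsat : ¬ ∃ x : Fin n → ZMod 2, ∀ i : Fin m, EqnHolds A b i x)
    (C : (Fin n → ZMod 2) → Bool) (V : Finset (Fin n))
    (hdep : ∀ x y : Fin n → ZMod 2, (∀ j ∈ V, x j = y j) → C x = C y)
    (hwidth : (V.card : ℝ) ≤ c * r / 2)
    (α : Bool)
    (I : Finset (Fin m)) (hI : (I.card : ℝ) ≤ r / 2)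
    (hIunsat : ¬ ∃ x : Fin n → ZMod 2, C x = !α ∧ ∀ i ∈ I, EqnHolds A b i x) :
    ∀ Icl : Finset (Fin m), RowClosure A r V Icl →
      ∀ x : Fin n → ZMod 2, (∀ i ∈ Icl, EqnHolds A b i x) → C x = α := by
  intro Icl hcl x hx
  have hbd : rowBdry A Icl ⊆ V := hcl.1.2
  have hIclr : Icl.card ≤ r := hcl.1.1
  -- |Icl| ≤ r/2 (over ℝ)
  have hIcl2 : (Icl.card : ℝ) ≤ r / 2 := by
    by_contra h
    push_neg at h
    have h1 := hexp.2.2 Icl h hIclr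
    have h2 : ((rowBdry A Icl).card : ℝ) ≤ (V.card : ℝ) := by
      exact_mod_cast Finset.card_le_card hbd
    nlinarith
  have hcardU : ∀ K : Finset (Fin m), K ⊆ I → (Icl ∪ K).card ≤ r := by
    intro K hK
    have h1 : (Icl ∪ K).card ≤ Icl.card + K.card := Finset.card_union_le _ _
    have h2 : K.card ≤ I.card := Finset.card_le_card hK
    have h3 : ((Icl ∪ K).card : ℝ) ≤ (r : ℝ) := by
      have h1' : ((Icl ∪ K).card : ℝ) ≤ (Icl.card : ℝ) + (K.card : ℝ) := by
        exact_mod_cast h1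
      have h2' : ((K.card : ℕ) : ℝ) ≤ (I.card : ℝ) := by exact_mod_cast h2
      linarith
    exact_mod_cast h3
  have main : ∀ K : Finset (Fin m), K ⊆ I \ Icl →
      ∃ y : Fin n → ZMod 2, (∀ j ∈ V, y j = x j) ∧ ∀ i ∈ Icl ∪ K, EqnHolds A b i y := by
    intro K
    induction K using Finset.strongInduction with
    | _ K ih =>
      intro hK
      rcases K.eq_empty_or_nonempty with rfl | hKne
      · exact ⟨x, fun j _ => rfl, by simpa using hx⟩
      · have hKI : K ⊆ I := hK.trans Finset.sdiff_subset
        have hdisj : Disjoint K Icl := by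
          rw [Finset.disjoint_left]
          intro a ha ha'
          exact (Finset.mem_sdiff.mp (hK ha)).2 ha'
        have hcard : (Icl ∪ K).card ≤ r := hcardU K hKI
        have hnotsub : ¬ rowBdry A (Icl ∪ K) ⊆ V := by
          intro hsub
          have hcont : RowContained A r V (Icl ∪ K) := ⟨hcard, hsub⟩
          have hle := hcl.2 _ hcont
          have heq : (Icl ∪ K).card = Icl.card + K.card :=
            Finset.card_union_of_disjoint hdisj.symm
          have hKpos : 0 < K.card := Finset.card_pos.mpr hKne
          omega
        obtain ⟨j, hjb, hjV⟩ := Finset.not_subset.mp hnotsub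
        have hj1 : ((Icl ∪ K).filter (fun i => A i j ≠ 0)).card = 1 := by
          simpa [rowBdry] using hjb
        obtain ⟨i, hieq⟩ := Finset.card_eq_one.mp hj1
        have hiA : i ∈ Icl ∪ K ∧ A i j ≠ 0 := by
          have hmem : i ∈ (Icl ∪ K).filter (fun i => A i j ≠ 0) := by
            rw [hieq]; exact Finset.mem_singleton_self i
          exact Finset.mem_filter.mp hmem
        have huniq : ∀ i' ∈ Icl ∪ K, A i' j ≠ 0 → i' = i := by
          intro i' h1 h2
          have hmem : i' ∈ (Icl ∪ K).filter (fun i => A i j ≠ 0) :=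
            Finset.mem_filter.mpr ⟨h1, h2⟩
          rw [hieq] at hmem
          exact Finset.mem_singleton.mp hmem
        have hiK : i ∈ K := by
          rcases Finset.mem_union.mp hiA.1 with h | h
          · exfalso
            have hfe : Icl.filter (fun i' => A i' j ≠ 0) = {i} := by
              apply Finset.Subset.antisymm
              · intro i' hi'
                obtain ⟨hm, hA⟩ := Finset.mem_filter.mp hi'
                exact Finset.mem_singleton.mpr (huniq i' (Finset.mem_union_left _ hm) hA)
              · intro i' hi'
                rw [Finset.mem_singleton.mp hi']
                exact Finset.mem_filter.mpr ⟨h, hiA.2⟩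
            have hjIcl : j ∈ rowBdry A Icl := by
              simp [rowBdry, hfe]
            exact hjV (hbd hjIcl)
          · exact h
        obtain ⟨y, hyV, hyE⟩ := ih (K.erase i) (Finset.erase_ssubset hiK)
          ((Finset.erase_subset _ _).trans hK)
        set v := y j + (b i - ∑ j', A i j' * y j') with hv
        refine ⟨Function.update y j v, ?_, ?_⟩
        · intro j' hj'
          rw [Function.update_of_ne (by rintro rfl; exact hjV hj')]
          exact hyV j' hj'
        · intro i' hi'
          by_cases hii : i' = i
          · subst hii
            show ∑ j', A i' j' * Function.update y j v j' = b i'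
            rw [sum_update_eq, zmod2_ne_zero hiA.2, hv]
            ring
          · have hi'mem : i' ∈ Icl ∪ K.erase i := by
              rcases Finset.mem_union.mp hi' with h | h
              · exact Finset.mem_union_left _ h
              · exact Finset.mem_union_right _ (Finset.mem_erase.mpr ⟨hii, h⟩)
            have hA0 : A i' j = 0 := by
              by_contra h
              exact hii (huniq i' hi' h)
            show ∑ j', A i' j' * Function.update y j v j' = b i'
            rw [sum_update_eq, hA0]
            simpa [EqnHolds] using hyE i' hi'mem
  obtain ⟨y, hyV, hyE⟩ := main (I \ Icl) (Finset.Subset.refl _)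
  have hCy : C y = C x := hdep y x hyV
  by_contra hCx
  have hCx' : C x = !α := by
    cases hα : C x <;> cases α <;> simp_all
  apply hIunsat
  refine ⟨y, by rw [hCy, hCx'], fun i hi => ?_⟩
  apply hyE
  by_cases h : i ∈ Icl
  · exact Finset.mem_union_left _ h
  · exact Finset.mem_union_right _ (Finset.mem_sdiff.mpr ⟨hi, h⟩)
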